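/- Let T := {Y ∈ V : g(Y,N) = 0} and B(X) := A X - g(A X, N)·N, φ(X) := J X - g(J X, N)·N. Then for every Y ∈ T, B(B(Y)) = Y + g(A N, Y)·φ(A ξ). If moreover g(A N, ξ) = 0, then A ξ ∈ T and B(A ξ) = ξ; if additionally g(A ξ, ξ) = 0 (𝔄-isotropic normal), then A N ∈ T, B(A N) = 0, and B(B(Y)) = Y - g(A N, Y)·A N for all Y ∈ T. -/

import Mathlib

noncomputable section

variable {V : Type*}

/-- The real inner product `g(x,y) = Re⟨x,y⟩` induced by the Hermitian inner product. -/
def g [NormedAddCommGroup V] [InnerProductSpace ℂ V] (x y : V) : ℝ := (inner ℂ x y : ℂ).re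

/-- The tangential part of `J X` on the hypersurface tangent space. -/
def phi [NormedAddCommGroup V] [InnerProductSpace ℂ V] (N X : V) : V :=
  Complex.I • X - g (Complex.I • X) N • N

/-- The tangential part of `A X` on the hypersurface tangent space. -/
def B [NormedAddCommGroup V] [InnerProductSpace ℂ V] (A : V →ₗ[ℝ] V) (N X : V) : V :=
  A X - g (A X) N • N

/-!
The real structure `A` is an involution that is symmetric for `g`, so on `T = N^⊥` the map
`B = A - g(A ·, N) N` squares to the identity up to a correction along the tangential part
`AN - g(AN, N) N` of `AN`, which is `-φ(Aξ)` because `A` anticommutes with `J`. Since `J` is a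
`g`-isometry and `g`-skew, `g(Aξ, N) = g(AN, ξ)` and `g(Aξ, ξ) = -g(AN, N)`, so the two
isotropy conditions make `Aξ` and `AN` tangent and kill the correction.
-/

section RealInner

variable [NormedAddCommGroup V] [InnerProductSpace ℂ V]

open Complex

lemma g_comm (x y : V) : g x y = g y x :=
  inner_re_symm (𝕜 := ℂ) x y

lemma g_smul_left (r : ℝ) (x y : V) : g (r • x) y = r * g x y := by
  simp [g, ← Complex.coe_smul, mul_comm]

lemma g_sub_left (x y z : V) : g (x - y) z = g x z - g y z := by
  simp [g]

lemma g_neg_left (x y : V) : g (-x) y = -g x y := by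
  simp [g, inner_neg_left]

lemma g_neg_right (x y : V) : g x (-y) = -g x y := by
  simp [g, inner_neg_right]

lemma g_self (x : V) : g x x = ‖x‖ ^ 2 :=
  inner_self_eq_norm_sq (𝕜 := ℂ) x

lemma g_I_smul_left (x y : V) : g (I • x) y = -g x (I • y) := by
  simp [g]

lemma g_I_smul_I_smul (x y : V) : g (I • x) (I • y) = g x y := by
  simp [g]

lemma g_I_smul_self_left (x : V) : g (I • x) x = 0 := by
  have := g_I_smul_left x x
  rw [g_comm x] at this
  linarith

lemma phi_I_smul (N X : V) : phi N (I • X) = -X + g X N • N := by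
  simp only [phi, smul_smul, I_mul_I, one_smul, g_neg_left, neg_smul, sub_neg_eq_add]

end RealInner

section TangentialPart

variable [NormedAddCommGroup V] [InnerProductSpace ℂ V] {A : V →ₗ[ℝ] V}

lemma g_map_comm_of_inner_map_map (hinvol : ∀ x, A (A x) = x)
    (hherm : ∀ x y, (inner ℂ (A x) (A y) : ℂ) = inner ℂ y x) (x y : V) :
    g (A x) y = g (A y) x := by
  simp only [g, ← hherm x (A y), hinvol]

lemma B_map_of_orthogonal (hinvol : ∀ x, A (A x) = x) {N X : V} (hX : g X N = 0) :
    B A N (A X) = X := by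
  simp [B, hinvol, hX]

lemma B_map_self (hinvol : ∀ x, A (A x) = x) {N : V} (hN : ‖N‖ = 1) : B A N (A N) = 0 := by
  simp [B, hinvol, g_self, hN]

lemma B_B_of_orthogonal (hinvol : ∀ x, A (A x) = x)
    (hsymm : ∀ x y, g (A x) y = g (A y) x) {N Y : V} (hY : g Y N = 0) :
    B A N (B A N Y) = Y - g (A N) Y • (A N - g (A N) N • N) := by
  simp only [B, map_sub, map_smul, hinvol, g_sub_left, g_smul_left, hsymm Y N, hY]
  module

end TangentialPart

/-- For `Y ∈ T`, `B(B(Y)) = Y + g(AN,Y)·φ(Aξ)`. If `g(AN,ξ) = 0` then `Aξ ∈ T` and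
`B(Aξ) = ξ`; if moreover `g(Aξ,ξ) = 0` (𝔄-isotropic normal) then `AN ∈ T`, `B(AN) = 0`
and `B(B(Y)) = Y - g(AN,Y)·AN` for all `Y ∈ T`. -/
theorem stmt_15 [NormedAddCommGroup V] [InnerProductSpace ℂ V]
    (A : V →ₗ[ℝ] V)
    (hA_invol : ∀ x, A (A x) = x)
    (hA_antiJ : ∀ x, A (Complex.I • x) = -(Complex.I • A x))
    (hA_herm : ∀ x y, (inner ℂ (A x) (A y) : ℂ) = inner ℂ y x)
    (N : V) (hN : ‖N‖ = 1)
    (ξ : V) (hξ : ξ = -(Complex.I • N)) :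
    (∀ Y : V, g Y N = 0 → B A N (B A N Y) = Y + g (A N) Y • phi N (A ξ)) ∧
    (g (A N) ξ = 0 →
      g (A ξ) N = 0 ∧ B A N (A ξ) = ξ ∧
      (g (A ξ) ξ = 0 →
        g (A N) N = 0 ∧ B A N (A N) = 0 ∧
        (∀ Y : V, g Y N = 0 → B A N (B A N Y) = Y - g (A N) Y • A N))) := by
  have hsymm := g_map_comm_of_inner_map_map hA_invol hA_herm
  have hAξ : A ξ = Complex.I • A N := by rw [hξ, map_neg, hA_antiJ, neg_neg]
  have hξN : g ξ N = 0 := by rw [hξ, g_neg_left, g_I_smul_self_left, neg_zero]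
  refine ⟨fun Y hY => ?_, fun hANξ => ⟨?_, B_map_of_orthogonal hA_invol hξN, fun hAξξ => ?_⟩⟩
  · rw [B_B_of_orthogonal hA_invol hsymm hY, hAξ, phi_I_smul]
    module
  · rwa [hAξ, g_I_smul_left, ← g_neg_right, ← hξ]
  · have hANN : g (A N) N = 0 := by
      rwa [hAξ, hξ, g_neg_right, g_I_smul_I_smul, neg_eq_zero] at hAξξ
    refine ⟨hANN, B_map_self hA_invol hN, fun Y hY => ?_⟩
    rw [B_B_of_orthogonal hA_invol hsymm hY, hANN, zero_smul, sub_zero]
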